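/- For every function ρ : List Bool → List Bool, let σ x y = true :: ρ x if x = y, and σ x y = false :: (x ++ y) if x ≠ y. Define f₂ : List Bool → List Bool → List Bool by f₂ x (true :: z) = x, f₂ x (false :: z) = z.drop x.length, and f₂ x [] = []. Then f₂ inverts σ with respect to the first argument: σ x (f₂ x (σ x y)) = σ x y for all x, y. -/
import Mathlib

/-- The function of Lemma "nynn": `σ x y = 1ρ(x)` if `x = y`, and `σ x y = 0xy` if `x ≠ y`. -/
def sigmaNYNN (ρ : List Bool → List Bool) (x y : List Bool) : List Bool :=
  if x = y then true :: ρ x else false :: (x ++ y)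

/-- The explicit inverter of `sigmaNYNN` with respect to the first argument. -/
def f2Inv (x : List Bool) : List Bool → List Bool
  | [] => []
  | true :: _ => x
  | false :: z => z.drop x.length

theorem stmt_10 (ρ : List Bool → List Bool) :
    ∀ x y, sigmaNYNN ρ x (f2Inv x (sigmaNYNN ρ x y)) = sigmaNYNN ρ x y := by
  intro x y
  by_cases h : x = y <;> simp [sigmaNYNN, f2Inv, h]
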